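/- Let $V$ and $W$ be matrix regular operator spaces. For $z_1, z_2 \in M_n(V \otimes_\Delta W)_+$, one has $|z_1 + z_2|_\Delta \le |z_1|_\Delta + |z_2|_\Delta$, where $|z|_\Delta = \inf\{\|\alpha\|^2 \|v\| \|w\| : z = \alpha(v \otimes w)\alpha^*, v \in M_k(V)^+, w \in M_l(W)^+, \alpha \in M_{n,kl}\}$. -/
import Mathlib


open scoped TensorProduct ComplexConjugate ComplexOrder
open Matrix

noncomputable section

/-- Operator norm of a rectangular complex matrix (as an operator between
Euclidean spaces). -/
def opN {m n : Type} [Fintype m] [Fintype n] [DecidableEq m] [DecidableEq n]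
    (α : Matrix m n ℂ) : ℝ :=
  ‖LinearMap.toContinuousLinearMap (Matrix.toEuclideanLin α)‖

section ops

variable {V W : Type} [AddCommGroup V] [Module ℂ V]

/-- Left action of a scalar matrix on a `V`-valued matrix. -/
def mulL {ι κ κ' : Type} [Fintype κ] (α : Matrix ι κ ℂ) (v : Matrix κ κ' V) :
    Matrix ι κ' V := Matrix.of fun i j => ∑ p, α i p • v p j

/-- Right action of a scalar matrix on a `V`-valued matrix. -/
def mulR {ι κ κ' : Type} [Fintype κ] (v : Matrix ι κ V) (β : Matrix κ κ' ℂ) :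
    Matrix ι κ' V := Matrix.of fun i j => ∑ p, β p j • v i p

/-- `trip α v β = α * v * β`. -/
def trip {ι κ κ' ι' : Type} [Fintype κ] [Fintype κ'] (α : Matrix ι κ ℂ)
    (v : Matrix κ κ' V) (β : Matrix κ' ι' ℂ) : Matrix ι ι' V :=
  mulR (mulL α v) β

/-- Entrywise application of a linear map to a matrix. -/
def mapMat {ι ι' : Type} [AddCommGroup W] [Module ℂ W] (T : V →ₗ[ℂ] W)
    (z : Matrix ι ι' V) : Matrix ι ι' W := Matrix.of fun i j => T (z i j)

/-- Amplification of a map into a matrix algebra. -/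
def ampS {κ ι : Type} (T : V →ₗ[ℂ] Matrix κ κ ℂ) (z : Matrix ι ι V) :
    Matrix (ι × κ) (ι × κ) ℂ := Matrix.of fun a b => T (z a.1 b.1) a.2 b.2

end ops

/-- A matrix regular operator space: an operator space which is matrix ordered
with closed proper-compatible cones, satisfying Ruan's axioms and the two
regularity conditions.  Matrix levels are indexed by arbitrary finite index
types. -/
structure MROS (V : Type) [AddCommGroup V] [Module ℂ V] [StarAddMonoid V]
    [StarModule ℂ V] where
  N : ∀ (ι : Type) [Fintype ι] [DecidableEq ι], Matrix ι ι V → ℝ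
  pos : ∀ (ι : Type) [Fintype ι] [DecidableEq ι], Set (Matrix ι ι V)
  N_zero : ∀ (ι : Type) [Fintype ι] [DecidableEq ι] (v : Matrix ι ι V),
    N ι v = 0 ↔ v = 0
  N_add : ∀ (ι : Type) [Fintype ι] [DecidableEq ι] (v w : Matrix ι ι V),
    N ι (v + w) ≤ N ι v + N ι w
  N_smul : ∀ (ι : Type) [Fintype ι] [DecidableEq ι] (c : ℂ) (v : Matrix ι ι V),
    N ι (c • v) = ‖c‖ * N ι v
  N_star : ∀ (ι : Type) [Fintype ι] [DecidableEq ι] (v : Matrix ι ι V),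
    N ι vᴴ = N ι v
  ruan1 : ∀ (ι κ : Type) [Fintype ι] [DecidableEq ι] [Fintype κ] [DecidableEq κ]
    (α : Matrix ι κ ℂ) (v : Matrix κ κ V) (β : Matrix κ ι ℂ),
    N ι (trip α v β) ≤ opN α * N κ v * opN β
  ruan2 : ∀ (ι κ : Type) [Fintype ι] [DecidableEq ι] [Fintype κ] [DecidableEq κ]
    (v : Matrix ι ι V) (w : Matrix κ κ V),
    N (ι ⊕ κ) (Matrix.fromBlocks v 0 0 w) = max (N ι v) (N κ w)
  pos_sa : ∀ (ι : Type) [Fintype ι] [DecidableEq ι] (v : Matrix ι ι V),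
    v ∈ pos ι → vᴴ = v
  pos_add : ∀ (ι : Type) [Fintype ι] [DecidableEq ι] (v w : Matrix ι ι V),
    v ∈ pos ι → w ∈ pos ι → v + w ∈ pos ι
  pos_smul : ∀ (ι : Type) [Fintype ι] [DecidableEq ι] (c : ℝ) (v : Matrix ι ι V),
    0 ≤ c → v ∈ pos ι → (c : ℂ) • v ∈ pos ι
  pos_compress : ∀ (ι κ : Type) [Fintype ι] [DecidableEq ι] [Fintype κ]
    [DecidableEq κ] (α : Matrix ι κ ℂ) (v : Matrix κ κ V),
    v ∈ pos κ → trip α v αᴴ ∈ pos ι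
  pos_closed : ∀ (ι : Type) [Fintype ι] [DecidableEq ι] (z : Matrix ι ι V),
    (∀ ε : ℝ, 0 < ε → ∃ u ∈ pos ι, N ι (z - u) < ε) → z ∈ pos ι
  reg1 : ∀ (ι : Type) [Fintype ι] [DecidableEq ι] (v u : Matrix ι ι V),
    vᴴ = v → u ∈ pos ι → u - v ∈ pos ι → u + v ∈ pos ι → N ι v ≤ N ι u
  reg2 : ∀ (ι : Type) [Fintype ι] [DecidableEq ι] (v : Matrix ι ι V),
    vᴴ = v → N ι v < 1 →
    ∃ u ∈ pos ι, N ι u < 1 ∧ u - v ∈ pos ι ∧ u + v ∈ pos ι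

section maps

variable {V W : Type} [AddCommGroup V] [Module ℂ V] [StarAddMonoid V]
  [StarModule ℂ V] [AddCommGroup W] [Module ℂ W] [StarAddMonoid W]
  [StarModule ℂ W]

/-- The norm of a single element, via the first matrix level. -/
def nrm1 (MV : MROS V) (v : V) : ℝ := MV.N PUnit (Matrix.of fun _ _ => v)

/-- A map into a matrix algebra is completely positive. -/
def IsCPs (MV : MROS V) {κ : Type} [Fintype κ] [DecidableEq κ]
    (φ : V →ₗ[ℂ] Matrix κ κ ℂ) : Prop :=
  ∀ (ι : Type) [Fintype ι] [DecidableEq ι], ∀ z ∈ MV.pos ι, (ampS φ z).PosSemidef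

/-- A map into a matrix algebra is completely bounded (in particular
continuous). -/
def IsCBs (MV : MROS V) {κ : Type} [Fintype κ] [DecidableEq κ]
    (φ : V →ₗ[ℂ] Matrix κ κ ℂ) : Prop :=
  ∃ C : ℝ, ∀ (ι : Type) [Fintype ι] [DecidableEq ι] (z : Matrix ι ι V),
    opN (ampS φ z) ≤ C * MV.N ι z

/-- A map into a matrix algebra is completely contractive. -/
def IsCCs (MV : MROS V) {κ : Type} [Fintype κ] [DecidableEq κ]
    (φ : V →ₗ[ℂ] Matrix κ κ ℂ) : Prop :=
  ∀ (ι : Type) [Fintype ι] [DecidableEq ι] (z : Matrix ι ι V),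
    opN (ampS φ z) ≤ MV.N ι z

/-- A linear map between matrix regular operator spaces is completely
positive. -/
def IsCPm (MV : MROS V) (MW : MROS W) (T : V →ₗ[ℂ] W) : Prop :=
  ∀ (ι : Type) [Fintype ι] [DecidableEq ι], ∀ z ∈ MV.pos ι, mapMat T z ∈ MW.pos ι

/-- Completely bounded norm with respect to given matrix norm data. -/
def cbWith (N1 : ∀ (ι : Type) [Fintype ι] [DecidableEq ι], Matrix ι ι V → ℝ)
    (N2 : ∀ (ι : Type) [Fintype ι] [DecidableEq ι], Matrix ι ι W → ℝ)
    (T : V →ₗ[ℂ] W) : ℝ :=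
  sInf { C : ℝ | 0 ≤ C ∧ ∀ (ι : Type) [Fintype ι] [DecidableEq ι]
    (z : Matrix ι ι V), N2 ι (mapMat T z) ≤ C * N1 ι z }

/-- The completely bounded norm of a map between matrix regular operator
spaces. -/
def cbN (MV : MROS V) (MW : MROS W) (T : V →ₗ[ℂ] W) : ℝ := cbWith MV.N MW.N T

/-- The adjoint map `T^*(v) = (T(v^*))^*`. -/
def adjMap (T : V →ₗ[ℂ] W) : V →ₗ[ℂ] W where
  toFun v := star (T (star v))
  map_add' v w := by simp [star_add, map_add]
  map_smul' c v := by simp [star_smul, _root_.map_smul]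

/-- `T` is decomposable, witnessed by completely positive maps `S1`, `S2`,
relative to given cone data on domain and codomain. -/
def IsDecompW
    (P1 : ∀ (ι : Type) [Fintype ι] [DecidableEq ι], Set (Matrix ι ι V))
    (P2 : ∀ (ι : Type) [Fintype ι] [DecidableEq ι], Set (Matrix ι ι W))
    (T S1 S2 : V →ₗ[ℂ] W) : Prop :=
  ∀ (ι : Type) [Fintype ι] [DecidableEq ι], ∀ v ∈ P1 ι,
    Matrix.fromBlocks (mapMat S1 v) (mapMat T v) (mapMat (adjMap T) v)
      (mapMat S2 v) ∈ P2 (ι ⊕ ι)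

/-- `T` is decomposable. -/
def Decomp (MV : MROS V) (MW : MROS W) (T : V →ₗ[ℂ] W) : Prop :=
  ∃ S1 S2 : V →ₗ[ℂ] W, IsDecompW MV.pos MW.pos T S1 S2

/-- Operator norm (at the first level) of a linear map, with respect to given
level-one norms. -/
def op1With (n1 : V → ℝ) (n2 : W → ℝ) (T : V →ₗ[ℂ] W) : ℝ :=
  sInf { C : ℝ | 0 ≤ C ∧ ∀ v : V, n2 (T v) ≤ C * n1 v }

/-- Decomposable norm with respect to given cone and norm data. -/
def decWith
    (P1 : ∀ (ι : Type) [Fintype ι] [DecidableEq ι], Set (Matrix ι ι V))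
    (P2 : ∀ (ι : Type) [Fintype ι] [DecidableEq ι], Set (Matrix ι ι W))
    (n1 : V → ℝ) (n2 : W → ℝ) (T : V →ₗ[ℂ] W) : ℝ :=
  sInf { c : ℝ | ∃ S1 S2 : V →ₗ[ℂ] W, IsDecompW P1 P2 T S1 S2 ∧
    op1With n1 n2 S1 ≤ c ∧ op1With n1 n2 S2 ≤ c }

/-- The decomposable norm of a map between matrix regular operator spaces. -/
def decN (MV : MROS V) (MW : MROS W) (T : V →ₗ[ℂ] W) : ℝ :=
  decWith MV.pos MW.pos (nrm1 MV) (nrm1 MW) T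

end maps

section tensor

variable {V W : Type} [AddCommGroup V] [Module ℂ V] [StarAddMonoid V]
  [StarModule ℂ V] [AddCommGroup W] [Module ℂ W] [StarAddMonoid W]
  [StarModule ℂ W]

/-- The Kronecker product of a `V`-valued and a `W`-valued matrix, with values
in `V ⊗ W`. -/
def kron {ι κ : Type} (v : Matrix ι ι V) (w : Matrix κ κ W) :
    Matrix (ι × κ) (ι × κ) (V ⊗[ℂ] W) :=
  Matrix.of fun a b => v a.1 b.1 ⊗ₜ[ℂ] w a.2 b.2

/-- The tensor product `φ ⊗ ψ : V ⊗ W → M_{k×l}` of two matrix-algebra valued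
maps. -/
def pairMap {k l : Type} (φ : V →ₗ[ℂ] Matrix k k ℂ)
    (ψ : W →ₗ[ℂ] Matrix l l ℂ) :
    (V ⊗[ℂ] W) →ₗ[ℂ] Matrix (k × l) (k × l) ℂ :=
  TensorProduct.lift (LinearMap.mk₂ ℂ
    (fun v w => Matrix.of fun a b => φ v a.1 b.1 * ψ w a.2 b.2)
    (fun v v' w => by
      ext a b
      simp [map_add, Matrix.add_apply, add_mul])
    (fun c v w => by
      ext a b
      simp [_root_.map_smul, Matrix.smul_apply, smul_eq_mul]
      ring)
    (fun v w w' => by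
      ext a b
      simp [map_add, Matrix.add_apply, mul_add])
    (fun c v w => by
      ext a b
      simp [_root_.map_smul, Matrix.smul_apply, smul_eq_mul]
      ring))

variable (MV : MROS V) (MW : MROS W)

/-- The cone `M_ι(V ⊗_Δ W)_+` of elements `α (v ⊗ w) α^*` with `v, w`
positive. -/
def DeltaPos (ι : Type) [Fintype ι] [DecidableEq ι] :
    Set (Matrix ι ι (V ⊗[ℂ] W)) :=
  { z | ∃ (k l : ℕ) (v : Matrix (Fin k) (Fin k) V)
      (w : Matrix (Fin l) (Fin l) W) (α : Matrix ι (Fin k × Fin l) ℂ),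
      v ∈ MV.pos (Fin k) ∧ w ∈ MW.pos (Fin l) ∧ z = trip α (kron v w) αᴴ }

/-- `|z|_Δ` for `z ∈ M_ι(V ⊗_Δ W)_+`. -/
def DeltaAbs (ι : Type) [Fintype ι] [DecidableEq ι]
    (z : Matrix ι ι (V ⊗[ℂ] W)) : ℝ :=
  sInf { r : ℝ | ∃ (k l : ℕ) (v : Matrix (Fin k) (Fin k) V)
    (w : Matrix (Fin l) (Fin l) W) (α : Matrix ι (Fin k × Fin l) ℂ),
    v ∈ MV.pos (Fin k) ∧ w ∈ MW.pos (Fin l) ∧ z = trip α (kron v w) αᴴ ∧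
    r = opN α ^ 2 * MV.N (Fin k) v * MW.N (Fin l) w }

/-- The norm `‖z‖_Δ`. -/
def DeltaN [Star (V ⊗[ℂ] W)] (ι : Type) [Fintype ι] [DecidableEq ι]
    (z : Matrix ι ι (V ⊗[ℂ] W)) : ℝ :=
  sInf { r : ℝ | ∃ u u' : Matrix ι ι (V ⊗[ℂ] W),
    Matrix.fromBlocks u z zᴴ u' ∈ DeltaPos MV MW (ι ⊕ ι) ∧
    r = max (DeltaAbs MV MW ι u) (DeltaAbs MV MW ι u') }

/-- The closed cone `M_ι(V ⊗_Δ W)^+` (closure of `M_ι(V ⊗_Δ W)_+` in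
`‖·‖_Δ`). -/
def DeltaPosC [Star (V ⊗[ℂ] W)] (ι : Type) [Fintype ι] [DecidableEq ι] :
    Set (Matrix ι ι (V ⊗[ℂ] W)) :=
  { z | ∀ ε : ℝ, 0 < ε → ∃ u ∈ DeltaPos MV MW ι, DeltaN MV MW ι (z - u) < ε }

/-- The cone `M_ι(V ⊗_δ W)_+`: elements whose pairings with all continuous
completely positive maps into matrix algebras are positive semidefinite. -/
def deltaPos (ι : Type) [Fintype ι] [DecidableEq ι] :
    Set (Matrix ι ι (V ⊗[ℂ] W)) :=
  { z | ∀ (k l : ℕ) (φ : V →ₗ[ℂ] Matrix (Fin k) (Fin k) ℂ)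
      (ψ : W →ₗ[ℂ] Matrix (Fin l) (Fin l) ℂ),
      IsCPs MV φ → IsCBs MV φ → IsCPs MW ψ → IsCBs MW ψ →
      (ampS (pairMap φ ψ) z).PosSemidef }

/-- `|z|_δ` for `z ∈ M_ι(V ⊗_δ W)_+`. -/
def deltaAbs (ι : Type) [Fintype ι] [DecidableEq ι]
    (z : Matrix ι ι (V ⊗[ℂ] W)) : ℝ :=
  sSup { r : ℝ | ∃ (k l : ℕ) (φ : V →ₗ[ℂ] Matrix (Fin k) (Fin k) ℂ)
    (ψ : W →ₗ[ℂ] Matrix (Fin l) (Fin l) ℂ),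
    IsCPs MV φ ∧ IsCCs MV φ ∧ IsCPs MW ψ ∧ IsCCs MW ψ ∧
    r = opN (ampS (pairMap φ ψ) z) }

/-- The norm `‖z‖_δ`. -/
def deltaN [Star (V ⊗[ℂ] W)] (ι : Type) [Fintype ι] [DecidableEq ι]
    (z : Matrix ι ι (V ⊗[ℂ] W)) : ℝ :=
  sInf { r : ℝ | ∃ u u' : Matrix ι ι (V ⊗[ℂ] W),
    Matrix.fromBlocks u z zᴴ u' ∈ deltaPos MV MW (ι ⊕ ι) ∧
    r = max (deltaAbs MV MW ι u) (deltaAbs MV MW ι u') }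

/-- The closed cone `M_ι(V ⊗_δ W)^+`. -/
def deltaPosC [Star (V ⊗[ℂ] W)] (ι : Type) [Fintype ι] [DecidableEq ι] :
    Set (Matrix ι ι (V ⊗[ℂ] W)) :=
  { z | ∀ ε : ℝ, 0 < ε → ∃ u ∈ deltaPos MV MW ι, deltaN MV MW ι (z - u) < ε }

/-- The injective operator space tensor norm `‖z‖_∨`: the supremum of pairings
with all pairs of complete contractions into matrix algebras. -/
def veeN (ι : Type) [Fintype ι] [DecidableEq ι]
    (z : Matrix ι ι (V ⊗[ℂ] W)) : ℝ :=
  sSup { r : ℝ | ∃ (k l : ℕ) (φ : V →ₗ[ℂ] Matrix (Fin k) (Fin k) ℂ)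
    (ψ : W →ₗ[ℂ] Matrix (Fin l) (Fin l) ℂ),
    IsCCs MV φ ∧ IsCCs MW ψ ∧ r = opN (ampS (pairMap φ ψ) z) }

end tensor

section dual

variable {V : Type} [AddCommGroup V] [Module ℂ V] [StarAddMonoid V]
  [StarModule ℂ V]

/-- The dual matrix cone on `M_ι(V^*)` : matrices of functionals which pair
positively with all positive matrices over `V`. -/
def dualPos (MV : MROS V) (ι : Type) [Fintype ι] [DecidableEq ι]
    (F : Matrix ι ι (V →ₗ[ℂ] ℂ)) : Prop :=
  ∀ (k : ℕ) (v : Matrix (Fin k) (Fin k) V), v ∈ MV.pos (Fin k) →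
    (Matrix.of fun (a b : Fin k × ι) => F a.2 b.2 (v a.1 b.1)).PosSemidef

/-- The dual matrix norm on `M_ι(V^*)`. -/
def dualN (MV : MROS V) (ι : Type) [Fintype ι] [DecidableEq ι]
    (F : Matrix ι ι (V →ₗ[ℂ] ℂ)) : ℝ :=
  sSup { r : ℝ | ∃ (k : ℕ) (v : Matrix (Fin k) (Fin k) V),
    MV.N (Fin k) v ≤ 1 ∧
    r = opN (Matrix.of fun (a b : Fin k × ι) => F a.2 b.2 (v a.1 b.1)) }

end dual

section helpers

lemma sum_equiv_ite {M : Type} [AddCommMonoid M] {κ ι : Type} [Fintype κ] [Fintype ι]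
    [DecidableEq ι] (e : κ ≃ ι) (j : ι) (h : κ → M) :
    (∑ x : κ, if e x = j then h x else 0) = h (e.symm j) := by
  rw [← Equiv.sum_comp e.symm (fun x => if e x = j then h x else 0)]
  simp

section opNlem
variable {m n p : Type} [Fintype m] [Fintype n] [Fintype p]
  [DecidableEq m] [DecidableEq n] [DecidableEq p]

lemma opN_nonneg (α : Matrix m n ℂ) : 0 ≤ opN α := norm_nonneg _

lemma opN_smul (c : ℂ) (α : Matrix m n ℂ) : opN (c • α) = ‖c‖ * opN α := by
  unfold opN
  rw [_root_.map_smul, _root_.map_smul]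
  exact norm_smul c (LinearMap.toContinuousLinearMap (Matrix.toEuclideanLin α))

lemma toCLM_comp (f : EuclideanSpace ℂ n →ₗ[ℂ] EuclideanSpace ℂ m)
    (g : EuclideanSpace ℂ p →ₗ[ℂ] EuclideanSpace ℂ n) :
    LinearMap.toContinuousLinearMap (f ∘ₗ g) =
      LinearMap.toContinuousLinearMap f ∘L LinearMap.toContinuousLinearMap g := by
  ext x; rfl

lemma toEuclideanLin_mul (A : Matrix m n ℂ) (B : Matrix n p ℂ) :
    Matrix.toEuclideanLin (A * B) =
      (Matrix.toEuclideanLin A) ∘ₗ (Matrix.toEuclideanLin B) := by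
  apply LinearMap.ext; intro x
  simp [Matrix.toEuclideanLin_apply, Matrix.mulVec_mulVec]

lemma opN_mul_conjTranspose_self (A : Matrix m n ℂ) : opN (A * Aᴴ) = opN A ^ 2 := by
  unfold opN
  rw [toEuclideanLin_mul, toCLM_comp, Matrix.toEuclideanLin_conjTranspose_eq_adjoint,
    LinearMap.adjoint_toContinuousLinearMap]
  set T := LinearMap.toContinuousLinearMap (Matrix.toEuclideanLin A)
  have h := ContinuousLinearMap.norm_adjoint_comp_self (ContinuousLinearMap.adjoint T)
  rw [ContinuousLinearMap.adjoint_adjoint] at h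
  rw [h, LinearIsometryEquiv.norm_map, sq]

lemma opN_add_le (A B : Matrix m n ℂ) : opN (A + B) ≤ opN A + opN B := by
  unfold opN; rw [map_add, map_add]; exact norm_add_le _ _

lemma opN_one_le : opN (1 : Matrix m m ℂ) ≤ 1 := by
  unfold opN
  have h : Matrix.toEuclideanLin (1 : Matrix m m ℂ) = LinearMap.id := by
    apply LinearMap.ext; intro x
    simp [Matrix.toEuclideanLin_apply]
  rw [h]
  exact ContinuousLinearMap.norm_id_le
end opNlem

section triplem
variable {V W : Type} [AddCommGroup V] [Module ℂ V] [AddCommGroup W] [Module ℂ W]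
variable {ι κ κ' ι' : Type} [Fintype κ] [Fintype κ']

lemma trip_apply (α : Matrix ι κ ℂ) (M : Matrix κ κ' V) (β : Matrix κ' ι' ℂ) (i : ι) (j : ι') :
    trip α M β i j = ∑ p, ∑ q, (α i p * β q j) • M p q := by
  show ∑ q, β q j • (∑ p, α i p • M p q) = _
  rw [Finset.sum_comm]
  refine Finset.sum_congr rfl fun p _ => ?_
  rw [Finset.smul_sum]
  refine Finset.sum_congr rfl fun q _ => ?_
  rw [smul_smul, mul_comm]

/-- embedding matrix of a map `g`. -/
def Em {ι κ : Type} [DecidableEq ι] (g : κ → ι) : Matrix ι κ ℂ :=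
  Matrix.of fun i p => if g p = i then 1 else 0

lemma trip_Em_equiv [DecidableEq ι] [Fintype ι] (e : κ ≃ ι) (u : Matrix κ κ V) :
    trip (Em e) u (Em e)ᴴ = Matrix.of fun i j => u (e.symm i) (e.symm j) := by
  ext i j
  rw [trip_apply]
  simp only [Em, Matrix.conjTranspose_apply, Matrix.of_apply, apply_ite (star : ℂ → ℂ),
    star_one, star_zero, ite_mul, one_mul, zero_mul, mul_ite, mul_one, mul_zero,
    ite_smul, one_smul, zero_smul, Equiv.apply_eq_iff_eq_symm_apply,
    Finset.sum_ite_eq', Finset.mem_univ, if_true]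
  simp_rw [sum_equiv_ite]

variable {κ₁ κ₂ : Type} [Fintype κ₁] [Fintype κ₂] [DecidableEq κ₁] [DecidableEq κ₂]

lemma trip_Em_inl (u : Matrix κ₁ κ₁ V) :
    trip (Em (Sum.inl : κ₁ → κ₁ ⊕ κ₂)) u (Em (Sum.inl : κ₁ → κ₁ ⊕ κ₂))ᴴ =
      Matrix.fromBlocks u 0 0 0 := by
  ext i j
  rw [trip_apply]
  rcases i with i | i <;> rcases j with j | j <;>
    simp [Em, Matrix.conjTranspose_apply, apply_ite (star : ℂ → ℂ),
      ite_mul, mul_ite, ite_smul, Finset.sum_ite_eq', eq_comm]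

lemma trip_Em_inr (u : Matrix κ₂ κ₂ V) :
    trip (Em (Sum.inr : κ₂ → κ₁ ⊕ κ₂)) u (Em (Sum.inr : κ₂ → κ₁ ⊕ κ₂))ᴴ =
      Matrix.fromBlocks 0 0 0 u := by
  ext i j
  rw [trip_apply]
  rcases i with i | i <;> rcases j with j | j <;>
    simp [Em, Matrix.conjTranspose_apply, apply_ite (star : ℂ → ℂ),
      ite_mul, mul_ite, ite_smul, Finset.sum_ite_eq', eq_comm]

lemma Em_mul_conjTranspose [Fintype ι] [DecidableEq ι] (e : κ ≃ ι) :
    Em e * (Em e)ᴴ = (1 : Matrix ι ι ℂ) := by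
  ext i j
  simp only [Matrix.mul_apply, Em, Matrix.conjTranspose_apply, Matrix.of_apply,
    apply_ite (star : ℂ → ℂ), star_one, star_zero, ite_mul, one_mul, zero_mul,
    mul_ite, mul_one, mul_zero]
  rw [sum_equiv_ite e j (fun x => if e x = i then (1:ℂ) else 0)]
  simp [Matrix.one_apply, eq_comm]

lemma conjTranspose_Em_mul [Fintype ι] [DecidableEq ι] [DecidableEq κ] (e : κ ≃ ι) :
    (Em e)ᴴ * Em e = (1 : Matrix κ κ ℂ) := by
  ext p q
  simp only [Matrix.mul_apply, Em, Matrix.conjTranspose_apply, Matrix.of_apply,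
    apply_ite (star : ℂ → ℂ), star_one, star_zero, ite_mul, one_mul, zero_mul,
    mul_ite, mul_one, mul_zero]
  simp [Finset.sum_ite_eq, Matrix.one_apply, EmbeddingLike.apply_eq_iff_eq, eq_comm]

lemma opN_Em_le_one [Fintype ι] [DecidableEq ι] [DecidableEq κ] (e : κ ≃ ι) :
    opN (Em e) ≤ 1 := by
  have h := opN_mul_conjTranspose_self (Em e)
  rw [Em_mul_conjTranspose] at h
  have h1 : opN (1 : Matrix ι ι ℂ) ≤ 1 := opN_one_le
  nlinarith [opN_nonneg (Em e)]

lemma opN_Em_conjTranspose_le_one [Fintype ι] [DecidableEq ι] [DecidableEq κ] (e : κ ≃ ι) :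
    opN (Em e)ᴴ ≤ 1 := by
  have h := opN_mul_conjTranspose_self (Em e)ᴴ
  rw [Matrix.conjTranspose_conjTranspose, conjTranspose_Em_mul] at h
  have h1 : opN (1 : Matrix κ κ ℂ) ≤ 1 := opN_one_le
  nlinarith [opN_nonneg (Em e)ᴴ]
end triplem

section comblem
variable {V W : Type} [AddCommGroup V] [Module ℂ V] [AddCommGroup W] [Module ℂ W]
variable {κ₁ κ₂ μ₁ μ₂ K L : Type} [Fintype κ₁] [Fintype κ₂] [Fintype μ₁] [Fintype μ₂]
  [Fintype K] [Fintype L] [DecidableEq κ₁] [DecidableEq κ₂] [DecidableEq μ₁]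
  [DecidableEq μ₂] [DecidableEq K] [DecidableEq L] {ι : Type}

/-- combined coefficient matrix -/
def combA (e : κ₁ ⊕ κ₂ ≃ K) (f : μ₁ ⊕ μ₂ ≃ L) (α₁ : Matrix ι (κ₁ × μ₁) ℂ)
    (α₂ : Matrix ι (κ₂ × μ₂) ℂ) : Matrix ι (K × L) ℂ :=
  Matrix.of fun i a =>
    Sum.elim (fun p => Sum.elim (fun q => α₁ i (p, q)) (fun _ => 0) (f.symm a.2))
             (fun p => Sum.elim (fun _ => 0) (fun q => α₂ i (p, q)) (f.symm a.2)) (e.symm a.1)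

/-- reindexed matrix -/
def rdx {κ ι : Type} (e : κ ≃ ι) (u : Matrix κ κ V) : Matrix ι ι V :=
  Matrix.of fun i j => u (e.symm i) (e.symm j)

lemma trip_combA (e : κ₁ ⊕ κ₂ ≃ K) (f : μ₁ ⊕ μ₂ ≃ L)
    (α₁ : Matrix ι (κ₁ × μ₁) ℂ) (α₂ : Matrix ι (κ₂ × μ₂) ℂ)
    (v₁ : Matrix κ₁ κ₁ V) (v₂ : Matrix κ₂ κ₂ V)
    (w₁ : Matrix μ₁ μ₁ W) (w₂ : Matrix μ₂ μ₂ W) :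
    trip (combA e f α₁ α₂)
      (kron (rdx e (Matrix.fromBlocks v₁ 0 0 v₂)) (rdx f (Matrix.fromBlocks w₁ 0 0 w₂)))
      (combA e f α₁ α₂)ᴴ
      = trip α₁ (kron v₁ w₁) α₁ᴴ + trip α₂ (kron v₂ w₂) α₂ᴴ := by
  ext i j
  rw [Matrix.add_apply, trip_apply, trip_apply, trip_apply]
  have hsum : ∀ (F : K × L → K × L → V ⊗[ℂ] W),
      (∑ a, ∑ b, F a b) = ∑ s, ∑ t, F (e.prodCongr f s) (e.prodCongr f t) := by
    intro F
    rw [← Equiv.sum_comp (e.prodCongr f) (fun a => ∑ b, F a b)]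
    exact Finset.sum_congr rfl fun s _ => (Equiv.sum_comp (e.prodCongr f) (F _)).symm
  rw [hsum]
  simp_rw [Fintype.sum_prod_type, Fintype.sum_sum_type]
  simp [combA, rdx, kron, Matrix.conjTranspose_apply, Equiv.prodCongr_apply, Prod.map,
    Equiv.symm_apply_apply, TensorProduct.zero_tmul, TensorProduct.tmul_zero,
    smul_zero, zero_smul, mul_zero, zero_mul, star_zero, Finset.sum_const_zero,
    add_zero, zero_add]

lemma combA_mul_conjTranspose (e : κ₁ ⊕ κ₂ ≃ K) (f : μ₁ ⊕ μ₂ ≃ L)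
    (α₁ : Matrix ι (κ₁ × μ₁) ℂ) (α₂ : Matrix ι (κ₂ × μ₂) ℂ) :
    combA e f α₁ α₂ * (combA e f α₁ α₂)ᴴ = α₁ * α₁ᴴ + α₂ * α₂ᴴ := by
  ext i j
  simp only [Matrix.mul_apply, Matrix.conjTranspose_apply, Matrix.add_apply]
  rw [← Equiv.sum_comp (e.prodCongr f)
    (fun a => combA e f α₁ α₂ i a * star (combA e f α₁ α₂ j a))]
  simp_rw [Fintype.sum_prod_type, Fintype.sum_sum_type]
  simp [combA, Equiv.prodCongr_apply, Prod.map, Equiv.symm_apply_apply]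

lemma trip_kron_scale {κ μ : Type} [Fintype κ] [Fintype μ]
    (α : Matrix ι (κ × μ) ℂ) (v : Matrix κ κ V) (w : Matrix μ μ W)
    (c d : ℝ) (hc : 0 < c) (hd : 0 < d) :
    trip ((Real.sqrt (c * d) : ℂ) • α)
      (kron ((((c⁻¹ : ℝ)) : ℂ) • v) ((((d⁻¹ : ℝ)) : ℂ) • w))
      ((Real.sqrt (c * d) : ℂ) • α)ᴴ = trip α (kron v w) αᴴ := by
  have h1 : ((Real.sqrt (c * d) : ℝ) : ℂ) * ((Real.sqrt (c * d) : ℝ) : ℂ) *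
      ((((c⁻¹ : ℝ)) : ℂ) * (((d⁻¹ : ℝ)) : ℂ)) = 1 := by
    rw [← Complex.ofReal_mul, Real.mul_self_sqrt (le_of_lt (mul_pos hc hd))]
    norm_cast
    field_simp
  ext i j
  rw [trip_apply, trip_apply]
  refine Finset.sum_congr rfl fun a _ => Finset.sum_congr rfl fun b _ => ?_
  simp only [Matrix.smul_apply, kron, Matrix.of_apply, Matrix.conjTranspose_apply,
    smul_eq_mul, star_mul', Complex.star_def, Complex.conj_ofReal,
    TensorProduct.smul_tmul', TensorProduct.tmul_smul, smul_smul]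
  congr 1
  congr 1
  linear_combination (α i a * (starRingEnd ℂ) (α j b)) * h1
end comblem

section mroslem
variable {V : Type} [AddCommGroup V] [Module ℂ V] [StarAddMonoid V] [StarModule ℂ V]

lemma N_nonneg (MV : MROS V) (ι : Type) [Fintype ι] [DecidableEq ι]
    (v : Matrix ι ι V) : 0 ≤ MV.N ι v := by
  have h0 : MV.N ι 0 = 0 := (MV.N_zero ι 0).mpr rfl
  have h1 : MV.N ι ((-1 : ℂ) • v) = ‖(-1 : ℂ)‖ * MV.N ι v := MV.N_smul ι (-1) v
  have h2 : v + (-1 : ℂ) • v = 0 := by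
    rw [neg_one_smul]; exact add_neg_cancel v
  have h3 := MV.N_add ι v ((-1 : ℂ) • v)
  rw [h2, h0] at h3
  simp only [norm_neg, norm_one, one_mul] at h1
  linarith

variable {κ₁ κ₂ : Type} [Fintype κ₁] [Fintype κ₂] [DecidableEq κ₁] [DecidableEq κ₂]

lemma pos_fromBlocks (MV : MROS V) {v₁ : Matrix κ₁ κ₁ V} {v₂ : Matrix κ₂ κ₂ V}
    (h₁ : v₁ ∈ MV.pos κ₁) (h₂ : v₂ ∈ MV.pos κ₂) :
    Matrix.fromBlocks v₁ 0 0 v₂ ∈ MV.pos (κ₁ ⊕ κ₂) := by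
  have g₁ := MV.pos_compress (κ₁ ⊕ κ₂) κ₁ (Em (Sum.inl : κ₁ → κ₁ ⊕ κ₂)) v₁ h₁
  have g₂ := MV.pos_compress (κ₁ ⊕ κ₂) κ₂ (Em (Sum.inr : κ₂ → κ₁ ⊕ κ₂)) v₂ h₂
  rw [trip_Em_inl] at g₁
  rw [trip_Em_inr] at g₂
  have := MV.pos_add _ _ _ g₁ g₂
  rwa [Matrix.fromBlocks_add, add_zero, zero_add, add_zero, zero_add] at this

lemma pos_rdx (MV : MROS V) {κ ι : Type} [Fintype κ] [DecidableEq κ] [Fintype ι]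
    [DecidableEq ι] (e : κ ≃ ι) {u : Matrix κ κ V} (h : u ∈ MV.pos κ) :
    rdx e u ∈ MV.pos ι := by
  have := MV.pos_compress ι κ (Em e) u h
  rwa [trip_Em_equiv] at this

lemma N_rdx_le (MV : MROS V) {κ ι : Type} [Fintype κ] [DecidableEq κ] [Fintype ι]
    [DecidableEq ι] (e : κ ≃ ι) (u : Matrix κ κ V) :
    MV.N ι (rdx e u) ≤ MV.N κ u := by
  have h : MV.N ι (trip (Em e) u (Em e)ᴴ) ≤ opN (Em e) * MV.N κ u * opN (Em e)ᴴ :=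
    MV.ruan1 ι κ (Em e) u (Em e)ᴴ
  rw [trip_Em_equiv] at h
  have h1 : opN (Em e) ≤ 1 := opN_Em_le_one e
  have h2 : opN (Em e)ᴴ ≤ 1 := opN_Em_conjTranspose_le_one e
  have h3 : 0 ≤ MV.N κ u := N_nonneg MV κ u
  have h4 : 0 ≤ opN (Em e) := opN_nonneg _
  have h5 : 0 ≤ opN (Em e)ᴴ := opN_nonneg _
  have t1 : opN (Em ⇑e) * MV.N κ u ≤ MV.N κ u := by nlinarith
  have t2 : opN (Em ⇑e) * MV.N κ u * opN (Em ⇑e)ᴴ ≤ opN (Em ⇑e) * MV.N κ u := by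
    nlinarith [mul_nonneg h4 h3]
  exact le_trans h (le_trans t2 t1)

end mroslem
end helpers

section keylem
variable {V W : Type} [AddCommGroup V] [Module ℂ V] [StarAddMonoid V]
  [StarModule ℂ V] [AddCommGroup W] [Module ℂ W] [StarAddMonoid W]
  [StarModule ℂ W]

/-- The defining set of `DeltaAbs`. -/
def Sset (MV : MROS V) (MW : MROS W) (ι : Type) [Fintype ι] [DecidableEq ι]
    (z : Matrix ι ι (V ⊗[ℂ] W)) : Set ℝ :=
  { r : ℝ | ∃ (k l : ℕ) (v : Matrix (Fin k) (Fin k) V)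
    (w : Matrix (Fin l) (Fin l) W) (α : Matrix ι (Fin k × Fin l) ℂ),
    v ∈ MV.pos (Fin k) ∧ w ∈ MW.pos (Fin l) ∧ z = trip α (kron v w) αᴴ ∧
    r = opN α ^ 2 * MV.N (Fin k) v * MW.N (Fin l) w }

lemma DeltaAbs_eq_sInf (MV : MROS V) (MW : MROS W) (ι : Type) [Fintype ι]
    [DecidableEq ι] (z : Matrix ι ι (V ⊗[ℂ] W)) :
    DeltaAbs MV MW ι z = sInf (Sset MV MW ι z) := rfl

lemma Sset_bddBelow (MV : MROS V) (MW : MROS W) (ι : Type) [Fintype ι]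
    [DecidableEq ι] (z : Matrix ι ι (V ⊗[ℂ] W)) : BddBelow (Sset MV MW ι z) := by
  refine ⟨0, fun r hr => ?_⟩
  obtain ⟨k, l, v, w, α, _, _, _, hr⟩ := hr
  rw [hr]
  have := opN_nonneg α
  have := N_nonneg MV (Fin k) v
  have := N_nonneg MW (Fin l) w
  positivity

lemma Sset_nonempty (MV : MROS V) (MW : MROS W) (ι : Type) [Fintype ι]
    [DecidableEq ι] (z : Matrix ι ι (V ⊗[ℂ] W)) (h : z ∈ DeltaPos MV MW ι) :
    (Sset MV MW ι z).Nonempty := by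
  obtain ⟨k, l, v, w, α, hv, hw, hz⟩ := h
  exact ⟨opN α ^ 2 * MV.N (Fin k) v * MW.N (Fin l) w,
    k, l, v, w, α, hv, hw, hz, rfl⟩

set_option maxHeartbeats 4000000 in
lemma key_le (MV : MROS V) (MW : MROS W) (ι : Type) [Fintype ι] [DecidableEq ι]
    {k₁ l₁ k₂ l₂ : ℕ}
    (v₁ : Matrix (Fin k₁) (Fin k₁) V) (w₁ : Matrix (Fin l₁) (Fin l₁) W)
    (α₁ : Matrix ι (Fin k₁ × Fin l₁) ℂ)
    (v₂ : Matrix (Fin k₂) (Fin k₂) V) (w₂ : Matrix (Fin l₂) (Fin l₂) W)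
    (α₂ : Matrix ι (Fin k₂ × Fin l₂) ℂ)
    (hv₁ : v₁ ∈ MV.pos (Fin k₁)) (hw₁ : w₁ ∈ MW.pos (Fin l₁))
    (hv₂ : v₂ ∈ MV.pos (Fin k₂)) (hw₂ : w₂ ∈ MW.pos (Fin l₂)) :
    DeltaAbs MV MW ι (trip α₁ (kron v₁ w₁) α₁ᴴ + trip α₂ (kron v₂ w₂) α₂ᴴ)
      ≤ opN α₁ ^ 2 * MV.N (Fin k₁) v₁ * MW.N (Fin l₁) w₁
        + opN α₂ ^ 2 * MV.N (Fin k₂) v₂ * MW.N (Fin l₂) w₂ := by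
  refine le_of_forall_pos_le_add fun ε hε => ?_
  set a₁ := MV.N (Fin k₁) v₁ with ha₁def
  set b₁ := MW.N (Fin l₁) w₁ with hb₁def
  set a₂ := MV.N (Fin k₂) v₂ with ha₂def
  set b₂ := MW.N (Fin l₂) w₂ with hb₂def
  have ha₁ : 0 ≤ a₁ := N_nonneg MV _ v₁
  have hb₁ : 0 ≤ b₁ := N_nonneg MW _ w₁
  have ha₂ : 0 ≤ a₂ := N_nonneg MV _ v₂
  have hb₂ : 0 ≤ b₂ := N_nonneg MW _ w₂
  have hα₁ : 0 ≤ opN α₁ := opN_nonneg α₁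
  have hα₂ : 0 ≤ opN α₂ := opN_nonneg α₂
  set C := opN α₁ ^ 2 * (a₁ + b₁ + 1) + opN α₂ ^ 2 * (a₂ + b₂ + 1) with hCdef
  have hC : 0 ≤ C := by positivity
  set δ := min 1 (ε / (C + 1)) with hδdef
  have hδpos : 0 < δ := lt_min one_pos (div_pos hε (by linarith))
  have hδ1 : δ ≤ 1 := min_le_left _ _
  have hδC : δ * C ≤ ε := by
    have h' : δ * (C + 1) ≤ ε :=
      (le_div_iff₀ (show (0:ℝ) < C + 1 by linarith)).mp (min_le_right 1 (ε / (C + 1)))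
    nlinarith [hδpos.le]
  -- scaled data
  set c₁ := a₁ + δ with hc₁def
  set d₁ := b₁ + δ with hd₁def
  set c₂ := a₂ + δ with hc₂def
  set d₂ := b₂ + δ with hd₂def
  have hc₁ : 0 < c₁ := by positivity
  have hd₁ : 0 < d₁ := by positivity
  have hc₂ : 0 < c₂ := by positivity
  have hd₂ : 0 < d₂ := by positivity
  set v₁' := (((c₁⁻¹ : ℝ)) : ℂ) • v₁ with hv₁'def
  set w₁' := (((d₁⁻¹ : ℝ)) : ℂ) • w₁ with hw₁'def
  set v₂' := (((c₂⁻¹ : ℝ)) : ℂ) • v₂ with hv₂'def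
  set w₂' := (((d₂⁻¹ : ℝ)) : ℂ) • w₂ with hw₂'def
  set α₁' := ((Real.sqrt (c₁ * d₁) : ℝ) : ℂ) • α₁ with hα₁'def
  set α₂' := ((Real.sqrt (c₂ * d₂) : ℝ) : ℂ) • α₂ with hα₂'def
  have hz₁' : trip α₁' (kron v₁' w₁') α₁'ᴴ = trip α₁ (kron v₁ w₁) α₁ᴴ :=
    trip_kron_scale α₁ v₁ w₁ c₁ d₁ hc₁ hd₁
  have hz₂' : trip α₂' (kron v₂' w₂') α₂'ᴴ = trip α₂ (kron v₂ w₂) α₂ᴴ :=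
    trip_kron_scale α₂ v₂ w₂ c₂ d₂ hc₂ hd₂
  -- positivity of scaled data
  have hv₁'pos : v₁' ∈ MV.pos (Fin k₁) := MV.pos_smul _ _ v₁ (by positivity) hv₁
  have hw₁'pos : w₁' ∈ MW.pos (Fin l₁) := MW.pos_smul _ _ w₁ (by positivity) hw₁
  have hv₂'pos : v₂' ∈ MV.pos (Fin k₂) := MV.pos_smul _ _ v₂ (by positivity) hv₂
  have hw₂'pos : w₂' ∈ MW.pos (Fin l₂) := MW.pos_smul _ _ w₂ (by positivity) hw₂
  -- combined data
  set e := (finSumFinEquiv : Fin k₁ ⊕ Fin k₂ ≃ Fin (k₁ + k₂)) with hedef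
  set f := (finSumFinEquiv : Fin l₁ ⊕ Fin l₂ ≃ Fin (l₁ + l₂)) with hfdef
  set Vc := rdx e (Matrix.fromBlocks v₁' 0 0 v₂') with hVcdef
  set Wc := rdx f (Matrix.fromBlocks w₁' 0 0 w₂') with hWcdef
  set Ac := combA e f α₁' α₂' with hAcdef
  have hident : trip Ac (kron Vc Wc) Acᴴ
      = trip α₁ (kron v₁ w₁) α₁ᴴ + trip α₂ (kron v₂ w₂) α₂ᴴ := by
    rw [hAcdef, hVcdef, hWcdef, trip_combA, hz₁', hz₂']
  have hVcpos : Vc ∈ MV.pos (Fin (k₁ + k₂)) :=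
    pos_rdx MV e (pos_fromBlocks MV hv₁'pos hv₂'pos)
  have hWcpos : Wc ∈ MW.pos (Fin (l₁ + l₂)) :=
    pos_rdx MW f (pos_fromBlocks MW hw₁'pos hw₂'pos)
  -- norm bounds
  have hNv₁' : MV.N (Fin k₁) v₁' = c₁⁻¹ * a₁ := by
    rw [hv₁'def, MV.N_smul, Complex.norm_real, Real.norm_eq_abs,
      abs_of_nonneg (by positivity)]
  have hNw₁' : MW.N (Fin l₁) w₁' = d₁⁻¹ * b₁ := by
    rw [hw₁'def, MW.N_smul, Complex.norm_real, Real.norm_eq_abs,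
      abs_of_nonneg (by positivity)]
  have hNv₂' : MV.N (Fin k₂) v₂' = c₂⁻¹ * a₂ := by
    rw [hv₂'def, MV.N_smul, Complex.norm_real, Real.norm_eq_abs,
      abs_of_nonneg (by positivity)]
  have hNw₂' : MW.N (Fin l₂) w₂' = d₂⁻¹ * b₂ := by
    rw [hw₂'def, MW.N_smul, Complex.norm_real, Real.norm_eq_abs,
      abs_of_nonneg (by positivity)]
  have hNVc : MV.N (Fin (k₁ + k₂)) Vc ≤ 1 := by
    refine le_trans (N_rdx_le MV e _) ?_
    rw [MV.ruan2]
    refine max_le ?_ ?_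
    · rw [hNv₁']
      rw [← div_eq_inv_mul]
      exact div_le_one_of_le₀ (by linarith) hc₁.le
    · rw [hNv₂']
      rw [← div_eq_inv_mul]
      exact div_le_one_of_le₀ (by linarith) hc₂.le
  have hNWc : MW.N (Fin (l₁ + l₂)) Wc ≤ 1 := by
    refine le_trans (N_rdx_le MW f _) ?_
    rw [MW.ruan2]
    refine max_le ?_ ?_
    · rw [hNw₁']
      rw [← div_eq_inv_mul]
      exact div_le_one_of_le₀ (by linarith) hd₁.le
    · rw [hNw₂']
      rw [← div_eq_inv_mul]
      exact div_le_one_of_le₀ (by linarith) hd₂.le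
  have hNVc0 : 0 ≤ MV.N (Fin (k₁ + k₂)) Vc := N_nonneg MV _ _
  have hNWc0 : 0 ≤ MW.N (Fin (l₁ + l₂)) Wc := N_nonneg MW _ _
  -- opN bound
  have hA₁' : opN α₁' ^ 2 = c₁ * d₁ * opN α₁ ^ 2 := by
    rw [hα₁'def, opN_smul, Complex.norm_real, Real.norm_eq_abs,
      abs_of_nonneg (Real.sqrt_nonneg _), mul_pow, Real.sq_sqrt (by positivity)]
  have hA₂' : opN α₂' ^ 2 = c₂ * d₂ * opN α₂ ^ 2 := by
    rw [hα₂'def, opN_smul, Complex.norm_real, Real.norm_eq_abs,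
      abs_of_nonneg (Real.sqrt_nonneg _), mul_pow, Real.sq_sqrt (by positivity)]
  have hAc2 : opN Ac ^ 2 ≤ opN α₁' ^ 2 + opN α₂' ^ 2 := by
    rw [← opN_mul_conjTranspose_self, ← opN_mul_conjTranspose_self,
      ← opN_mul_conjTranspose_self, hAcdef, combA_mul_conjTranspose]
    exact opN_add_le _ _
  have hAc0 : 0 ≤ opN Ac := opN_nonneg _
  -- membership
  have hmem : opN Ac ^ 2 * MV.N (Fin (k₁ + k₂)) Vc * MW.N (Fin (l₁ + l₂)) Wc
      ∈ Sset MV MW ι (trip α₁ (kron v₁ w₁) α₁ᴴ + trip α₂ (kron v₂ w₂) α₂ᴴ) :=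
    ⟨k₁ + k₂, l₁ + l₂, Vc, Wc, Ac, hVcpos, hWcpos, hident.symm, rfl⟩
  have hle := csInf_le (Sset_bddBelow MV MW ι _) hmem
  rw [← DeltaAbs_eq_sInf] at hle
  refine le_trans hle ?_
  have hstep : opN Ac ^ 2 * MV.N (Fin (k₁ + k₂)) Vc * MW.N (Fin (l₁ + l₂)) Wc
      ≤ opN Ac ^ 2 := by
    have s1 : opN Ac ^ 2 * MV.N (Fin (k₁ + k₂)) Vc ≤ opN Ac ^ 2 := by
      nlinarith [sq_nonneg (opN Ac)]
    have s2 : opN Ac ^ 2 * MV.N (Fin (k₁ + k₂)) Vc * MW.N (Fin (l₁ + l₂)) Wc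
        ≤ opN Ac ^ 2 * MV.N (Fin (k₁ + k₂)) Vc := by
      nlinarith [mul_nonneg (sq_nonneg (opN Ac)) hNVc0]
    linarith
  refine le_trans hstep (le_trans hAc2 ?_)
  rw [hA₁', hA₂']
  have hexp : c₁ * d₁ * opN α₁ ^ 2 + c₂ * d₂ * opN α₂ ^ 2
      = opN α₁ ^ 2 * a₁ * b₁ + opN α₂ ^ 2 * a₂ * b₂
        + δ * (opN α₁ ^ 2 * (a₁ + b₁ + δ) + opN α₂ ^ 2 * (a₂ + b₂ + δ)) := by
    rw [hc₁def, hd₁def, hc₂def, hd₂def]; ring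
  rw [hexp]
  have hCC : opN α₁ ^ 2 * (a₁ + b₁ + δ) + opN α₂ ^ 2 * (a₂ + b₂ + δ) ≤ C := by
    rw [hCdef]
    nlinarith [sq_nonneg (opN α₁), sq_nonneg (opN α₂)]
  have hfin : δ * (opN α₁ ^ 2 * (a₁ + b₁ + δ) + opN α₂ ^ 2 * (a₂ + b₂ + δ)) ≤ ε :=
    le_trans (mul_le_mul_of_nonneg_left hCC hδpos.le) hδC
  linarith
end keylem

/-- Subadditivity of `|·|_Δ` on the cone `M_ι(V ⊗_Δ W)_+`. -/
theorem stmt_4 {V W : Type} [AddCommGroup V] [Module ℂ V] [StarAddMonoid V]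
    [StarModule ℂ V] [AddCommGroup W] [Module ℂ W] [StarAddMonoid W]
    [StarModule ℂ W] [StarAddMonoid (V ⊗[ℂ] W)] [StarModule ℂ (V ⊗[ℂ] W)]
    (hst : ∀ (v : V) (w : W), star (v ⊗ₜ[ℂ] w) = star v ⊗ₜ[ℂ] star w)
    (MV : MROS V) (MW : MROS W)
    (ι : Type) [Fintype ι] [DecidableEq ι] (z₁ z₂ : Matrix ι ι (V ⊗[ℂ] W))
    (h₁ : z₁ ∈ DeltaPos MV MW ι) (h₂ : z₂ ∈ DeltaPos MV MW ι) :
    DeltaAbs MV MW ι (z₁ + z₂) ≤ DeltaAbs MV MW ι z₁ + DeltaAbs MV MW ι z₂ := by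
  obtain ⟨k₁, l₁, v₁, w₁, α₁, hv₁, hw₁, hz₁⟩ := h₁
  obtain ⟨k₂, l₂, v₂, w₂, α₂, hv₂, hw₂, hz₂⟩ := h₂
  have hne₁ : (Sset MV MW ι z₁).Nonempty :=
    Sset_nonempty MV MW ι z₁ ⟨k₁, l₁, v₁, w₁, α₁, hv₁, hw₁, hz₁⟩
  have hne₂ : (Sset MV MW ι z₂).Nonempty :=
    Sset_nonempty MV MW ι z₂ ⟨k₂, l₂, v₂, w₂, α₂, hv₂, hw₂, hz₂⟩
  have hkey : ∀ r₁ ∈ Sset MV MW ι z₁, ∀ r₂ ∈ Sset MV MW ι z₂,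
      DeltaAbs MV MW ι (z₁ + z₂) ≤ r₁ + r₂ := by
    rintro r₁ ⟨m₁, n₁, u₁, x₁, β₁, hu₁, hx₁, hrz₁, hr₁⟩
      r₂ ⟨m₂, n₂, u₂, x₂, β₂, hu₂, hx₂, hrz₂, hr₂⟩
    rw [hrz₁, hrz₂, hr₁, hr₂]
    exact key_le MV MW ι u₁ x₁ β₁ u₂ x₂ β₂ hu₁ hx₁ hu₂ hx₂
  rw [DeltaAbs_eq_sInf MV MW ι z₁, DeltaAbs_eq_sInf MV MW ι z₂]
  have h2 : ∀ r₁ ∈ Sset MV MW ι z₁,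
      DeltaAbs MV MW ι (z₁ + z₂) - sInf (Sset MV MW ι z₂) ≤ r₁ := by
    intro r₁ h
    have h3 : DeltaAbs MV MW ι (z₁ + z₂) - r₁ ≤ sInf (Sset MV MW ι z₂) :=
      le_csInf hne₂ fun r₂ hs => by linarith [hkey r₁ h r₂ hs]
    linarith
  have h4 := le_csInf hne₁ h2
  linarith
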